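/- For every nonnegative integer k: ∑_{n=0}^∞ (1/2)^n · ((1/2+k)_n (1/3)_n (2/3)_n)/((1+k)_n (1+2k)_n (1)_n) · (6n+6k+1) = (3√3/π) · ((1)_k^2)/((1/3)_k (2/3)_k). -/

import Mathlib

/-!
Write `c k n` for the coefficient of the series, `w k = (1/3)_k (2/3)_k / (1)_k²` and
`F k n = w k · c k n · (6n + 6k + 1)`. With `G k n = 4n(3n + 3k + 2)/(n + 2k + 1) · w k · c k n`,
`(F, G)` is a WZ pair: `F (k+1) n - F k n = G k (n+1) - G k n`. Since `G k 0 = 0` and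
`G k n → 0` as `n → ∞`, the sum `∑ₙ F k n` does not depend on `k`. As `k → ∞`, dominated
convergence kills every term but `n = 0`, and `F k 0 = w k (6k + 1) → 6 / (Γ(1/3) Γ(2/3)) = 3√3/π`
by Euler's limit formula for `Γ` and the reflection formula.
-/

open Filter Real

noncomputable def poch (x : ℝ) : ℕ → ℝ
  | 0 => 1
  | n + 1 => poch x n * (x + n)

noncomputable def pochR (x k : ℝ) : ℝ := Real.Gamma (x + k) / Real.Gamma x

open scoped Nat Topology

theorem poch_succ (x : ℝ) (n : ℕ) : poch x (n + 1) = poch x n * (x + n) := rfl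

theorem poch_pos {x : ℝ} (hx : 0 < x) (n : ℕ) : 0 < poch x n := by
  induction n with
  | zero => exact one_pos
  | succ n ih => rw [poch_succ]; positivity

theorem poch_le_poch {x y : ℝ} (hx : 0 < x) (hxy : x ≤ y) (n : ℕ) : poch x n ≤ poch y n := by
  induction n with
  | zero => rfl
  | succ n ih =>
    have := poch_pos (hx.trans_le hxy) n
    rw [poch_succ, poch_succ]
    gcongr

theorem poch_succ_eq_mul_poch_add_one (x : ℝ) (n : ℕ) : poch x (n + 1) = x * poch (x + 1) n := by
  induction n with
  | zero => simp [poch]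
  | succ n ih => rw [poch_succ, ih, poch_succ]; push_cast; ring

theorem poch_add_one {x : ℝ} (hx : x ≠ 0) (n : ℕ) : poch (x + 1) n = poch x n * (x + n) / x := by
  rw [eq_div_iff hx, mul_comm, ← poch_succ_eq_mul_poch_add_one, poch_succ]

theorem poch_one (n : ℕ) : poch 1 n = n ! := by
  induction n with
  | zero => simp [poch]
  | succ n ih => rw [poch_succ, ih, Nat.factorial_succ]; push_cast; ring

theorem poch_eq_prod (x : ℝ) (n : ℕ) : poch x n = ∏ j ∈ Finset.range n, (x + j) := by
  induction n with
  | zero => rfl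
  | succ n ih => rw [poch_succ, ih, Finset.prod_range_succ]

theorem GammaSeq_eq_div_poch (s : ℝ) (n : ℕ) : GammaSeq s n = n ^ s * n ! / poch s (n + 1) := by
  rw [GammaSeq, poch_eq_prod]

theorem tendsto_mul_poch_mul_poch_one_sub {s : ℝ} (hs0 : 0 < s) (hs1 : s < 1) :
    Tendsto (fun n : ℕ => n * (poch s n * poch (1 - s) n) / (n ! : ℝ) ^ 2) atTop
      (𝓝 (sin (π * s) / π)) := by
  have hGamma : Tendsto (fun n : ℕ => GammaSeq s n * GammaSeq (1 - s) n) atTop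
      (𝓝 (π / sin (π * s))) := by
    rw [← Gamma_mul_Gamma_one_sub]
    exact (GammaSeq_tendsto_Gamma s).mul (GammaSeq_tendsto_Gamma _)
  have hratio : Tendsto (fun n : ℕ => n / (n + s) * (n / (n + (1 - s)))) atTop (𝓝 1) := by
    simpa using (tendsto_natCast_div_add_atTop s).mul (tendsto_natCast_div_add_atTop (1 - s))
  have hsin : 0 < sin (π * s) := sin_pos_of_pos_of_lt_pi (by positivity) (by nlinarith [pi_pos])
  have hlim := hratio.div hGamma (by positivity)
  rw [one_div_div] at hlim
  refine hlim.congr' ?_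
  filter_upwards [eventually_gt_atTop 0] with n hn
  have hn' : (0 : ℝ) < n := by exact_mod_cast hn
  have hrpow : (n : ℝ) ^ s * (n : ℝ) ^ (1 - s) = n := by rw [← rpow_add hn']; simp
  have := poch_pos hs0 n
  have := poch_pos (sub_pos.2 hs1) n
  have : (0 : ℝ) < n ! := by exact_mod_cast n.factorial_pos
  have : 0 < (n : ℝ) + (1 - s) := by linarith
  rw [Pi.div_apply, GammaSeq_eq_div_poch, GammaSeq_eq_div_poch, poch_succ, poch_succ]
  field_simp
  linear_combination -((n : ℝ) + s) * (n + (1 - s)) * hrpow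

namespace PiSeries

noncomputable def coeff (k n : ℕ) : ℝ :=
  (1/2 : ℝ) ^ n * (poch (1/2 + k) n * poch (1/3) n * poch (2/3) n) /
    (poch (1 + k) n * poch (1 + 2 * k) n * poch 1 n)

noncomputable def summand (k n : ℕ) : ℝ := coeff k n * (6 * n + 6 * k + 1)

noncomputable def weight (k : ℕ) : ℝ := poch (1/3) k * poch (2/3) k / poch 1 k ^ 2

noncomputable def wzPair (k n : ℕ) : ℝ := weight k * summand k n

noncomputable def wzCert (k n : ℕ) : ℝ :=
  4 * n * (3 * n + 3 * k + 2) / (n + 2 * k + 1) * (weight k * coeff k n)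

theorem coeff_pos (k n : ℕ) : 0 < coeff k n := by
  have := poch_pos (by positivity : (0 : ℝ) < 1/2 + k) n
  have := poch_pos (by positivity : (0 : ℝ) < 1/3) n
  have := poch_pos (by positivity : (0 : ℝ) < 2/3) n
  have := poch_pos (by positivity : (0 : ℝ) < 1 + k) n
  have := poch_pos (by positivity : (0 : ℝ) < 1 + 2 * k) n
  have := poch_pos one_pos n
  unfold coeff
  positivity

theorem weight_pos (k : ℕ) : 0 < weight k := by
  have := poch_pos (by positivity : (0 : ℝ) < 1/3) k
  have := poch_pos (by positivity : (0 : ℝ) < 2/3) k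
  have := poch_pos one_pos k
  unfold weight
  positivity

theorem coeff_le (k n : ℕ) : coeff k n ≤ (1/2) ^ n := by
  have := poch_pos (by positivity : (0 : ℝ) < 1/2 + k) n
  have := poch_pos (by positivity : (0 : ℝ) < 1/3) n
  have := poch_pos (by positivity : (0 : ℝ) < 2/3) n
  have := poch_pos (by positivity : (0 : ℝ) < 1 + k) n
  have := poch_pos (by positivity : (0 : ℝ) < 1 + 2 * k) n
  have := poch_pos one_pos n
  have hnum : poch (1/2 + k) n * poch (1/3) n * poch (2/3) n ≤
      poch (1 + k) n * poch (1 + 2 * k) n * poch 1 n := by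
    gcongr
    · exact poch_le_poch (by positivity) (by linarith) n
    · exact poch_le_poch (by positivity) (by linarith [(k.cast_nonneg : (0 : ℝ) ≤ k)]) n
    · exact poch_le_poch (by positivity) (by norm_num) n
  unfold coeff
  rw [mul_div_assoc]
  exact mul_le_of_le_one_right (by positivity) ((div_le_one (by positivity)).2 hnum)

theorem coeff_succ_mul_le (k n : ℕ) : coeff k (n + 1) * (1 + 2 * k) ≤ 1 := by
  have hk : (0 : ℝ) ≤ k := k.cast_nonneg
  have := poch_pos (by positivity : (0 : ℝ) < 1/2 + k) (n + 1)
  have := poch_pos (by positivity : (0 : ℝ) < 1/3) (n + 1)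
  have := poch_pos (by positivity : (0 : ℝ) < 2/3) (n + 1)
  have := poch_pos (by positivity : (0 : ℝ) < 2/3 + 1) n
  have := poch_pos (by positivity : (0 : ℝ) < 1 + k) (n + 1)
  have := poch_pos (by positivity : (0 : ℝ) < 1 + 2 * k) (n + 1)
  have := poch_pos one_pos (n + 1)
  -- the extra factor `1 + 2k` is absorbed by the first factor of `(1 + 2k)_(n+1)`
  have h23 : poch (2/3) (n + 1) * (1 + 2 * k) ≤ poch (1 + 2 * k) (n + 1) := by
    rw [poch_succ_eq_mul_poch_add_one (2/3), poch_succ_eq_mul_poch_add_one (1 + 2 * k)]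
    have : poch (2/3 + 1) n ≤ poch (1 + 2 * k + 1) n := poch_le_poch (by positivity) (by linarith) n
    nlinarith
  have hnum : poch (1/2 + k) (n + 1) * poch (1/3) (n + 1) * (poch (2/3) (n + 1) * (1 + 2 * k)) ≤
      poch (1 + k) (n + 1) * poch 1 (n + 1) * poch (1 + 2 * k) (n + 1) := by
    gcongr ?_ * ?_ * ?_
    · exact poch_le_poch (by positivity) (by linarith) _
    · exact poch_le_poch (by positivity) (by norm_num) _
  have hhalf : (1/2 : ℝ) ^ (n + 1) ≤ 1 := pow_le_one₀ (by norm_num) (by norm_num)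
  unfold coeff
  rw [div_mul_eq_mul_div, div_le_one (by positivity)]
  calc (1/2 : ℝ) ^ (n + 1) * (poch (1/2 + k) (n + 1) * poch (1/3) (n + 1) * poch (2/3) (n + 1))
        * (1 + 2 * k)
      = (1/2 : ℝ) ^ (n + 1) *
        (poch (1/2 + k) (n + 1) * poch (1/3) (n + 1) * (poch (2/3) (n + 1) * (1 + 2 * k))) := by
          ring
    _ ≤ 1 * (poch (1 + k) (n + 1) * poch 1 (n + 1) * poch (1 + 2 * k) (n + 1)) := by gcongr
    _ = _ := by ring

theorem weight_succ (k : ℕ) :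
    weight (k + 1) = weight k * ((1/3 + k) * (2/3 + k) / (1 + k) ^ 2) := by
  have := poch_pos one_pos k
  unfold weight
  rw [poch_succ, poch_succ, poch_succ]
  field_simp

theorem coeff_succ_right (k n : ℕ) : coeff k (n + 1) =
    coeff k n * ((1/2 + k + n) * (1/3 + n) * (2/3 + n) /
      (2 * (1 + k + n) * (1 + 2 * k + n) * (1 + n))) := by
  have := poch_pos (by positivity : (0 : ℝ) < 1 + k) n
  have := poch_pos (by positivity : (0 : ℝ) < 1 + 2 * k) n
  have := poch_pos one_pos n
  unfold coeff
  rw [poch_succ (1/2 + k), poch_succ (1/3), poch_succ (2/3), poch_succ (1 + k),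
    poch_succ (1 + 2 * k), poch_succ 1]
  field_simp
  ring

theorem coeff_succ_left (k n : ℕ) : coeff (k + 1) n =
    coeff k n * ((1/2 + k + n) * (1 + k) * (1 + 2 * k) * (2 + 2 * k) /
      ((1/2 + k) * (1 + k + n) * (1 + 2 * k + n) * (2 + 2 * k + n))) := by
  have := poch_pos (by positivity : (0 : ℝ) < 1 + k) n
  have := poch_pos (by positivity : (0 : ℝ) < 1 + 2 * k) n
  have := poch_pos one_pos n
  have h1 : (1/2 : ℝ) + (k + 1 : ℕ) = 1/2 + k + 1 := by push_cast; ring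
  have h2 : (1 : ℝ) + (k + 1 : ℕ) = 1 + k + 1 := by push_cast; ring
  have h3 : (1 : ℝ) + 2 * (k + 1 : ℕ) = 1 + 2 * k + 1 + 1 := by push_cast; ring
  unfold coeff
  rw [h1, h2, h3, poch_add_one (by positivity), poch_add_one (by positivity),
    poch_add_one (by positivity), poch_add_one (by positivity)]
  field_simp
  ring

theorem wzPair_succ_sub (k n : ℕ) :
    wzPair (k + 1) n - wzPair k n = wzCert k (n + 1) - wzCert k n := by
  unfold wzPair summand wzCert
  rw [weight_succ, coeff_succ_left, coeff_succ_right]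
  push_cast
  field_simp
  ring

theorem weight_mul_le (k : ℕ) : weight k * (k + 1) ≤ 1 := by
  induction k with
  | zero => simp [weight, poch]
  | succ k ih =>
    have hk : (0 : ℝ) ≤ k := k.cast_nonneg
    have hratio : (1/3 + k) * (2/3 + k) / (1 + k) ^ 2 * (k + 1 + 1) ≤ (k + 1 : ℝ) := by
      rw [div_mul_eq_mul_div, div_le_iff₀ (by positivity)]
      nlinarith
    have := weight_pos k
    calc weight (k + 1) * ((k + 1 : ℕ) + 1)
        = weight k * ((1/3 + k) * (2/3 + k) / (1 + k) ^ 2 * (k + 1 + 1)) := by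
          rw [weight_succ]; push_cast; ring
      _ ≤ weight k * (k + 1) := by gcongr
      _ ≤ 1 := ih

theorem weight_le_one (k : ℕ) : weight k ≤ 1 :=
  le_trans (le_mul_of_one_le_right (weight_pos k).le (by simp)) (weight_mul_le k)

theorem summand_pos (k n : ℕ) : 0 < summand k n := by
  have := coeff_pos k n
  unfold summand
  positivity

theorem summable_linear_mul_half_pow (a b : ℝ) :
    Summable (fun n : ℕ => (a * n + b) * (1/2 : ℝ) ^ n) := by
  have hgeom (j : ℕ) : Summable (fun n : ℕ => (n : ℝ) ^ j * (1/2) ^ n) :=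
    summable_pow_mul_geometric_of_norm_lt_one j (by norm_num)
  simpa [add_mul, mul_assoc] using ((hgeom 1).mul_left a).add ((hgeom 0).mul_left b)

theorem summable_summand (k : ℕ) : Summable (summand k) := by
  refine .of_nonneg_of_le (fun n => (summand_pos k n).le) (fun n => ?_)
    (summable_linear_mul_half_pow 6 (6 * k + 1))
  have := coeff_le k n
  have := coeff_pos k n
  unfold summand
  nlinarith

theorem wzPair_nonneg (k n : ℕ) : 0 ≤ wzPair k n :=
  mul_nonneg (weight_pos k).le (summand_pos k n).le

theorem wzPair_le (k n : ℕ) : wzPair k n ≤ (6 * n + 6) * (1/2) ^ n := by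
  have hw := weight_mul_le k
  have hw1 := weight_le_one k
  have hw0 := (weight_pos k).le
  have hc := coeff_le k n
  have : (0 : ℝ) ≤ n := n.cast_nonneg
  unfold wzPair summand
  calc weight k * (coeff k n * (6 * n + 6 * k + 1))
      ≤ weight k * ((1/2) ^ n * (6 * n + 6 * k + 1)) := by gcongr
    _ = (1/2) ^ n * (6 * n * weight k + 6 * (weight k * (k + 1)) - 5 * weight k) := by ring
    _ ≤ (1/2) ^ n * (6 * n + 6) := by gcongr; nlinarith
    _ = (6 * n + 6) * (1/2) ^ n := by ring

theorem tendsto_wzCert (k : ℕ) : Tendsto (wzCert k) atTop (𝓝 0) := by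
  have hbound (n : ℕ) :
      wzCert k n ≤ 12 * (n ^ 2 * (1/2) ^ n) + (12 * k + 8) * (n ^ 1 * (1/2) ^ n) := by
    have := (weight_pos k).le
    have := weight_le_one k
    have := (coeff_pos k n).le
    have := coeff_le k n
    unfold wzCert
    calc 4 * n * (3 * n + 3 * k + 2) / (n + 2 * k + 1) * (weight k * coeff k n)
        ≤ 4 * n * (3 * n + 3 * k + 2) * (1 * (1/2) ^ n) := by
          gcongr
          · exact div_le_self (by positivity) (by linarith [(k.cast_nonneg : (0 : ℝ) ≤ k)])
      _ = _ := by ring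
  have hhalf : |(1/2 : ℝ)| < 1 := by norm_num
  have hlim := ((tendsto_pow_const_mul_const_pow_of_abs_lt_one 2 hhalf).const_mul 12).add
    ((tendsto_pow_const_mul_const_pow_of_abs_lt_one 1 hhalf).const_mul (12 * (k : ℝ) + 8))
  rw [mul_zero, mul_zero, add_zero] at hlim
  refine squeeze_zero (fun n => ?_) hbound hlim
  have := (weight_pos k).le
  have := (coeff_pos k n).le
  unfold wzCert
  positivity

theorem tsum_wzPair_succ (k : ℕ) : ∑' n, wzPair (k + 1) n = ∑' n, wzPair k n := by
  have hs (j : ℕ) : Summable (wzPair j) := (summable_summand j).mul_left _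
  have hdiff : HasSum (fun n => wzPair (k + 1) n - wzPair k n) 0 := by
    rw [((hs _).sub (hs _)).hasSum_iff_tendsto_nat]
    simp only [wzPair_succ_sub, Finset.sum_range_sub]
    have hcert0 : wzCert k 0 = 0 := by simp [wzCert]
    simpa only [hcert0, sub_zero] using tendsto_wzCert k
  exact sub_eq_zero.1 (((hs _).hasSum.sub (hs _).hasSum).unique hdiff)

theorem tendsto_weight_mul :
    Tendsto (fun k : ℕ => weight k * (6 * k + 1)) atTop (𝓝 (3 * √3 / π)) := by
  have hGauss := tendsto_mul_poch_mul_poch_one_sub (s := 1/3) (by norm_num) (by norm_num)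
  have hlin : Tendsto (fun k : ℕ => 6 + 1 / (k : ℝ)) atTop (𝓝 6) := by
    simpa using tendsto_one_div_atTop_nhds_zero_nat.const_add (6 : ℝ)
  have hval : sin (π * (1/3)) / π * 6 = 3 * √3 / π := by
    rw [mul_one_div, sin_pi_div_three]; ring
  rw [← hval]
  refine (hGauss.mul hlin).congr' ?_
  filter_upwards [eventually_gt_atTop 0] with k hk
  have hk' : (k : ℝ) ≠ 0 := by exact_mod_cast hk.ne'
  have : (k ! : ℝ) ≠ 0 := by exact_mod_cast k.factorial_ne_zero
  rw [weight, poch_one, show (1 : ℝ) - 1/3 = 2/3 by norm_num]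
  field_simp

theorem tendsto_wzPair_zero : Tendsto (fun k => wzPair k 0) atTop (𝓝 (3 * √3 / π)) := by
  simpa [wzPair, summand, coeff, poch] using tendsto_weight_mul

theorem tendsto_wzPair_succ (m : ℕ) : Tendsto (fun k => wzPair k (m + 1)) atTop (𝓝 0) := by
  have hbound (k : ℕ) : wzPair k (m + 1) ≤ (6 * m + 7) * (1 / (k + 1)) := by
    have hk : (0 : ℝ) ≤ k := k.cast_nonneg
    have hw := weight_mul_le k
    have hw0 := (weight_pos k).le
    have hc := coeff_succ_mul_le k m
    have hc0 := (coeff_pos k (m + 1)).le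
    rw [mul_one_div, le_div_iff₀ (by positivity)]
    unfold wzPair summand
    push_cast
    calc weight k * (coeff k (m + 1) * (6 * (m + 1) + 6 * k + 1)) * (k + 1)
        ≤ weight k * (coeff k (m + 1) * ((6 * m + 7) * (1 + 2 * k))) * (k + 1) := by
          gcongr; nlinarith
      _ = (6 * m + 7) * (coeff k (m + 1) * (1 + 2 * k)) * (weight k * (k + 1)) := by ring
      _ ≤ (6 * m + 7) * 1 * 1 := by gcongr
      _ = 6 * m + 7 := by ring
  have hlim := tendsto_one_div_add_atTop_nhds_zero_nat.const_mul (6 * (m : ℝ) + 7)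
  rw [mul_zero] at hlim
  exact squeeze_zero (fun k => wzPair_nonneg k _) hbound hlim

theorem tsum_wzPair (k : ℕ) : ∑' n, wzPair k n = 3 * √3 / π := by
  have hconst (k : ℕ) : ∑' n, wzPair k n = ∑' n, wzPair 0 n := by
    induction k with
    | zero => rfl
    | succ k ih => rw [tsum_wzPair_succ, ih]
  have hlim (n : ℕ) :
      Tendsto (fun k => wzPair k n) atTop (𝓝 (if n = 0 then 3 * √3 / π else 0)) := by
    cases n with
    | zero => simpa using tendsto_wzPair_zero
    | succ m => simpa using tendsto_wzPair_succ m
  have hTannery := tendsto_tsum_of_dominated_convergence (summable_linear_mul_half_pow 6 6) hlim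
    (.of_forall fun k n => by
      rw [Real.norm_of_nonneg (wzPair_nonneg k n)]; exact wzPair_le k n)
  simp only [hconst, tsum_ite_eq] at hTannery
  rw [hconst]
  exact tendsto_nhds_unique tendsto_const_nhds hTannery

theorem hasSum_summand (k : ℕ) : HasSum (summand k) (3 * √3 / π / weight k) := by
  rw [← tsum_wzPair k]
  simp only [wzPair, tsum_mul_left]
  rw [mul_div_cancel_left₀ _ (weight_pos k).ne']
  exact (summable_summand k).hasSum

end PiSeries

theorem stmt_17 (k : ℕ) :
    Filter.Tendsto (fun N => ∑ n ∈ Finset.range N,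
      (1/2 : ℝ)^n * (poch (1/2 + k) n * poch (1/3) n * poch (2/3) n) / (poch (1 + k) n * poch (1 + 2*k) n * poch 1 n) * (6*(n:ℝ)+6*(k:ℝ)+1))
      Filter.atTop (nhds (3 * Real.sqrt 3 / Real.pi * ((poch 1 k)^2 / (poch (1/3) k * poch (2/3) k)))) := by
  have h := (PiSeries.hasSum_summand k).tendsto_sum_nat
  rwa [PiSeries.weight, div_div_eq_mul_div, mul_div_assoc] at h
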